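/- Let C be a coalgebra which is a right A-module with action μ_C : C ⊗ A → C. Then the linear span I of all elements μ_C(c,a)_{(1)} α(μ_C(c,a)_{(2)}) − c_{(1)} α(μ_C(c_{(2)},a)), for a ∈ A, c ∈ C, α ∈ Hom(C,k), is a coideal of C (i.e. ε(I) = 0 and Δ(I) ⊆ C ⊗ I + I ⊗ C). -/

import Mathlib

open TensorProduct LinearMap Coalgebra

variable {k A C : Type*} [Field k] [Ring A] [Algebra k A]
  [AddCommGroup C] [Module k C] [Coalgebra k C]

/-- `μ : C ⊗ A → C` is a unital, associative right `A`-action on `C`. -/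
def IsAction (μ : C ⊗[k] A →ₗ[k] C) : Prop :=
  (∀ c : C, μ (c ⊗ₜ[k] (1 : A)) = c)
  ∧ (∀ (c : C) (a a' : A), μ (μ (c ⊗ₜ[k] a) ⊗ₜ[k] a') = μ (c ⊗ₜ[k] (a * a')))

/-- Action by a fixed element `a ∈ A`: `c ↦ μ(c ⊗ a)`. -/
noncomputable def actBy (μ : C ⊗[k] A →ₗ[k] C) (a : A) : C →ₗ[k] C :=
  μ ∘ₗ (TensorProduct.mk k C A).flip a

/-- The subspace `I` of Lemma 3.2: the span of all
`μ(c,a)₍₁₎ α(μ(c,a)₍₂₎) − c₍₁₎ α(μ(c₍₂₎,a))` for `a ∈ A`, `c ∈ C`, `α ∈ Hom(C,k)`. -/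
noncomputable def coidealI (μ : C ⊗[k] A →ₗ[k] C) : Submodule k C :=
  Submodule.span k {x : C | ∃ (a : A) (c : C) (α : C →ₗ[k] k), x =
    TensorProduct.rid k C (α.lTensor C (comul (R := k) (μ (c ⊗ₜ[k] a))))
      - TensorProduct.rid k C ((α ∘ₗ actBy μ a).lTensor C (comul (R := k) c))}

/-
Write `β ⇀ x = x₍₁₎ β(x₍₂₎)` (`leftHit β x` below). The generators of `I` are
`α ⇀ ρ c − (α ∘ ρ) ⇀ c` with `ρ = μ(·, a)`. Coassociativity gives `Δ(β ⇀ x) = x₍₁₎ ⊗ (β ⇀ x₍₂₎)`,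
so the coproduct of a generator splits as `(id ⊗ g)(Δ c) + (id ⊗ (α ⇀ ·))(Δ ρ c − (id ⊗ ρ) Δ c)`,
where `g = (α ⇀ ρ ·) − ((α ∘ ρ) ⇀ ·)` takes values in `I`, so the first term lies in `C ⊗ I`.
Contracting the right factor of `Δ ρ c − (id ⊗ ρ) Δ c` with any `β` yields a generator of `I`,
and over a field a tensor all of whose right contractions lie in `I` belongs to `I ⊗ C`.
The counit kills generators because `ε(β ⇀ x) = β x`.
-/

theorem Submodule.mem_range_rTensor_subtype_of_forall_rid_lTensor_mem {R M N : Type*}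
    [CommRing R] [AddCommGroup M] [Module R M] [AddCommGroup N] [Module R N] [Module.Free R N]
    (I : Submodule R M) (t : M ⊗[R] N)
    (h : ∀ β : Module.Dual R N, TensorProduct.rid R M (β.lTensor M t) ∈ I) :
    t ∈ range (I.subtype.rTensor N) := by
  let b := Module.Free.chooseBasis R N
  let E := equivFinsuppOfBasisRight (M := M) b
  rw [← E.symm_apply_apply t, equivFinsuppOfBasisRight_symm_apply]
  refine Submodule.finsuppSum_mem _ _ _ _ fun i _ => ⟨⟨E t i, ?_⟩ ⊗ₜ b i, rfl⟩
  rw [equivFinsuppOfBasisRight_apply]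
  exact h _

section LeftHit

variable {R D : Type*} [CommRing R] [AddCommGroup D] [Module R D] [Coalgebra R D]

noncomputable def leftHit (β : Module.Dual R D) : D →ₗ[R] D :=
  (TensorProduct.rid R D).toLinearMap ∘ₗ β.lTensor D ∘ₗ comul

theorem comul_leftHit (β : Module.Dual R D) (x : D) :
    comul (leftHit β x) = (leftHit β).lTensor D (comul x) := by
  have rid_natural (t : D ⊗[R] D) : comul (TensorProduct.rid R D (β.lTensor D t)) =
      TensorProduct.rid R (D ⊗[R] D) (β.lTensor _ ((comul (R := R) (A := D)).rTensor D t)) := by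
    induction t <;> simp_all
  have rid_assoc (t : D ⊗[R] (D ⊗[R] D)) :
      TensorProduct.rid R (D ⊗[R] D) (β.lTensor _ ((TensorProduct.assoc R D D D).symm t)) =
        ((TensorProduct.rid R D).toLinearMap ∘ₗ β.lTensor D).lTensor D t := by
    induction t with
    | zero => simp
    | add => simp_all
    | tmul x yz => induction yz <;> simp_all [tmul_add]
  calc comul (leftHit β x)
      = TensorProduct.rid R (D ⊗[R] D) (β.lTensor _ (comul.rTensor D (comul x))) :=
        rid_natural _
    _ = TensorProduct.rid R (D ⊗[R] D) (β.lTensor _ ((TensorProduct.assoc R D D D).symm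
          (comul.lTensor D (comul x)))) := by rw [coassoc_symm_apply]
    _ = (leftHit β).lTensor D (comul x) := by rw [rid_assoc, ← lTensor_comp_apply]; rfl

theorem counit_leftHit (β : Module.Dual R D) (x : D) : counit (leftHit β x) = β x := by
  have counit_rid (t : D ⊗[R] D) : counit (TensorProduct.rid R D (β.lTensor D t)) =
      β (TensorProduct.lid R D ((counit (R := R) (A := D)).rTensor D t)) := by
    induction t <;> simp_all [mul_comm]
  calc counit (leftHit β x) = β (TensorProduct.lid R D (counit.rTensor D (comul x))) :=
        counit_rid _
    _ = β x := by rw [rTensor_counit_comul, lid_tmul, one_smul]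

theorem counit_leftHit_sub_leftHit_comp (α : Module.Dual R D) (ρ : D →ₗ[R] D) (c : D) :
    counit (R := R) (leftHit α (ρ c) - leftHit (α ∘ₗ ρ) c) = 0 := by
  rw [map_sub, counit_leftHit, counit_leftHit, comp_apply, sub_self]

theorem comul_leftHit_sub_leftHit_comp_mem [Module.Free R D] (I : Submodule R D)
    (ρ : D →ₗ[R] D)
    (hI : ∀ (β : Module.Dual R D) (c : D), leftHit β (ρ c) - leftHit (β ∘ₗ ρ) c ∈ I)
    (α : Module.Dual R D) (c : D) :
    comul (leftHit α (ρ c) - leftHit (α ∘ₗ ρ) c) ∈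
      range (I.subtype.lTensor D) ⊔ range (I.subtype.rTensor D) := by
  set T := comul (ρ c) - ρ.lTensor D (comul c)
  set g := leftHit α ∘ₗ ρ - leftHit (α ∘ₗ ρ)
  have split : comul (leftHit α (ρ c) - leftHit (α ∘ₗ ρ) c) =
      g.lTensor D (comul c) + (leftHit α).lTensor D T := by
    simp only [T, g, map_sub, comul_leftHit, lTensor_sub, lTensor_comp, LinearMap.sub_apply,
      comp_apply]
    abel
  obtain ⟨s, hs⟩ : T ∈ range (I.subtype.rTensor D) :=
    Submodule.mem_range_rTensor_subtype_of_forall_rid_lTensor_mem I T fun β => by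
      rw [map_sub, map_sub, ← lTensor_comp_apply]
      exact hI β c
  rw [split]
  refine Submodule.add_mem_sup ⟨(g.codRestrict I (hI α)).lTensor D (comul c), ?_⟩
    ⟨(leftHit α).lTensor I s, ?_⟩
  · rw [← lTensor_comp_apply]; rfl
  · rw [← hs, ← comp_apply, ← comp_apply, lTensor_comp_rTensor, rTensor_comp_lTensor]

end LeftHit

theorem coidealI_isCoideal_general (μ : C ⊗[k] A →ₗ[k] C) :
    (∀ x ∈ coidealI μ, counit (R := k) x = 0)
    ∧ (∀ x ∈ coidealI μ, comul (R := k) x ∈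
        LinearMap.range ((coidealI μ).subtype.lTensor C)
          ⊔ LinearMap.range ((coidealI μ).subtype.rTensor C)) := by
  have generator_mem (a : A) (β : C →ₗ[k] k) (c : C) :
      leftHit β (actBy μ a c) - leftHit (β ∘ₗ actBy μ a) c ∈ coidealI μ :=
    Submodule.subset_span ⟨a, c, β, rfl⟩
  constructor
  · intro x hx
    refine (Submodule.span_le (p := ker counit)).2 ?_ hx
    rintro _ ⟨a, c, α, rfl⟩
    exact counit_leftHit_sub_leftHit_comp α (actBy μ a) c
  · intro x hx
    rw [← Submodule.mem_comap]
    refine (Submodule.span_le (p := Submodule.comap comul _)).2 ?_ hx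
    rintro _ ⟨a, c, α, rfl⟩
    exact comul_leftHit_sub_leftHit_comp_mem _ _ (generator_mem a) α c

/-- Lemma 3.2: the span `I` of the elements
`μ(c,a)₍₁₎ α(μ(c,a)₍₂₎) − c₍₁₎ α(μ(c₍₂₎,a))` is a coideal of `C`:
`ε(I) = 0` and `Δ(I) ⊆ C ⊗ I + I ⊗ C`. -/
theorem coidealI_isCoideal (μ : C ⊗[k] A →ₗ[k] C) (hμ : IsAction μ) :
    (∀ x ∈ coidealI μ, counit (R := k) x = 0)
    ∧ (∀ x ∈ coidealI μ, comul (R := k) x ∈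
        LinearMap.range ((coidealI μ).subtype.lTensor C)
          ⊔ LinearMap.range ((coidealI μ).subtype.rTensor C)) :=
  coidealI_isCoideal_general μ
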